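/- arXiv:1601.02793 — 9 statements merged into one kernel-verified Lean document; each statement's English description precedes it below -/
import Mathlib

section
/- The maps φ ↦ φ_- and φ ↦ φ^+ are well defined self-maps of Hom(P,[n]) (i.e., φ_- and φ^+ are again isotone), and they form a Galois correspondence: for all φ, ψ ∈ Hom(P,[n]) one has φ_- ≤ ψ if and only if φ ≤ ψ^+. -/
/-!
P is a finite poset, `Fin n` (with `0 < n`) plays the role of the chain [n] = {1 < ⋯ < n}.
For an isotone map φ : P → [n], φ₋(p) = max{φ q : q < p} (max ∅ = bottom) and
φ⁺(p) = min{φ q : q > p} (min ∅ = top).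
-/

variable {P : Type*} [PartialOrder P] [Fintype P]

/-- `φ₋(p) = max {φ q | q < p}`, the max of the empty set being the bottom element of `[n]`. -/
def phiMinus [DecidableRel ((· < ·) : P → P → Prop)] {n : ℕ} (hn : 0 < n)
    (φ : P → Fin n) (p : P) : Fin n :=
  (insert (⟨0, hn⟩ : Fin n) ((Finset.univ.filter fun q => q < p).image φ)).sup'
    (Finset.insert_nonempty _ _) id

/-- `φ⁺(p) = min {φ q | p < q}`, the min of the empty set being the top element of `[n]`. -/
def phiPlus [DecidableRel ((· < ·) : P → P → Prop)] {n : ℕ} (hn : 0 < n)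
    (φ : P → Fin n) (p : P) : Fin n :=
  (insert (⟨n - 1, by omega⟩ : Fin n) ((Finset.univ.filter fun q => p < q).image φ)).inf'
    (Finset.insert_nonempty _ _) id

section

variable [DecidableRel ((· < ·) : P → P → Prop)] {n : ℕ} (hn : 0 < n)

lemma phiMinus_le_iff (φ : P → Fin n) (p : P) (x : Fin n) :
    phiMinus hn φ p ≤ x ↔ ∀ q, q < p → φ q ≤ x := by
  simp only [phiMinus, Finset.sup'_le_iff, Finset.forall_mem_insert, Finset.forall_mem_image,
    Finset.mem_filter, Finset.mem_univ, true_and, id]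
  exact and_iff_right (Fin.mk_le_of_le_val (Nat.zero_le _))

lemma le_phiPlus_iff (φ : P → Fin n) (p : P) (x : Fin n) :
    x ≤ phiPlus hn φ p ↔ ∀ q, p < q → x ≤ φ q := by
  simp only [phiPlus, Finset.le_inf'_iff, Finset.forall_mem_insert, Finset.forall_mem_image,
    Finset.mem_filter, Finset.mem_univ, true_and, id]
  exact and_iff_right (Fin.le_def.mpr (by have := x.isLt; simp only; omega))

lemma phiMinus_monotone (φ : P → Fin n) : Monotone (phiMinus hn φ) := fun p p' hpp' =>
  (phiMinus_le_iff hn φ p _).mpr fun q hq =>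
    (phiMinus_le_iff hn φ p' _).mp le_rfl q (hq.trans_le hpp')

lemma phiPlus_monotone (φ : P → Fin n) : Monotone (phiPlus hn φ) := fun p p' hpp' =>
  (le_phiPlus_iff hn φ p' _).mpr fun q hq =>
    (le_phiPlus_iff hn φ p _).mp le_rfl q (hpp'.trans_lt hq)

-- Both sides unfold to `∀ q p, q < p → φ q ≤ ψ p`.
lemma gc_phiMinus_phiPlus : GaloisConnection (phiMinus (P := P) hn) (phiPlus hn) := by
  intro φ ψ
  simp only [Pi.le_def, phiMinus_le_iff, le_phiPlus_iff]
  exact ⟨fun h q p hqp => h p q hqp, fun h p q hqp => h q p hqp⟩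

end

/-- The maps φ ↦ φ₋ and φ ↦ φ⁺ are well defined self-maps of Hom(P,[n]) (they send
isotone maps to isotone maps), and they form a Galois correspondence:
φ₋ ≤ ψ iff φ ≤ ψ⁺. -/
theorem stmt0 [DecidableRel ((· < ·) : P → P → Prop)] {n : ℕ} (hn : 0 < n) :
    (∀ φ : P → Fin n, Monotone φ → Monotone (phiMinus hn φ) ∧ Monotone (phiPlus hn φ)) ∧
      (∀ φ ψ : P → Fin n, Monotone φ → Monotone ψ →
        (phiMinus hn φ ≤ ψ ↔ φ ≤ phiPlus hn ψ)) :=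
  ⟨fun φ _ => ⟨phiMinus_monotone hn φ, phiPlus_monotone hn φ⟩,
    fun φ ψ _ _ => gc_phiMinus_phiPlus hn φ ψ⟩
end

section
/- Every face F of the staircase complex 𝔅(P,n) is contained in T_*(φ) for some isotone map φ ∈ Hom(P,[n]). -/
variable {P : Type*} [PartialOrder P] [Fintype P]

/-- `T_*(φ) = {(p,i) | φ q ≤ i ≤ φ p for all q < p}`. -/
def Tstar {n : ℕ} (φ : P → Fin n) : Set (P × Fin n) :=
  {x | x.2 ≤ φ x.1 ∧ ∀ q : P, q < x.1 → φ q ≤ x.2}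

/-- A staircase face is a subset of P × [n] containing no pair (p,i), (q,j) with
p < q in P and i > j in [n]; these are the faces of the staircase complex 𝔅(P,n). -/
def IsStaircaseFace {n : ℕ} (F : Set (P × Fin n)) : Prop :=
  ∀ x ∈ F, ∀ y ∈ F, x.1 < y.1 → ¬ y.2 < x.2

/-! Take for `φ p` the largest label `i` of a vertex `(q, i) ∈ F` with `q ≤ p` (the bottom label if
there is none). This is the least isotone map with `i ≤ φ p` for all `(p, i) ∈ F`, and the staircase
condition on `F` is exactly what makes `φ q ≤ i` whenever `q < p` and `(p, i) ∈ F`. -/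

section SupBelow

variable {Q α : Type*} [Preorder Q] [CompleteLinearOrder α]

def supBelow (F : Set (Q × α)) (p : Q) : α :=
  sSup (Prod.snd '' {x ∈ F | x.1 ≤ p})

variable {F : Set (Q × α)}

theorem monotone_supBelow : Monotone (supBelow F) := fun _ _ hpq =>
  sSup_le_sSup <| Set.image_mono fun _ hx => ⟨hx.1, hx.2.trans hpq⟩

theorem le_supBelow {x : Q × α} (hx : x ∈ F) : x.2 ≤ supBelow F x.1 :=
  le_sSup ⟨x, ⟨hx, le_rfl⟩, rfl⟩

theorem supBelow_le_of_lt (hF : ∀ x ∈ F, ∀ y ∈ F, x.1 < y.1 → ¬ y.2 < x.2)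
    {x : Q × α} (hx : x ∈ F) {q : Q} (hq : q < x.1) : supBelow F q ≤ x.2 :=
  sSup_le <| by
    rintro _ ⟨y, ⟨hy, hyq⟩, rfl⟩
    exact not_lt.mp (hF y hy x hx (hyq.trans_lt hq))

end SupBelow

/-- Every face F of the staircase complex 𝔅(P,n) is contained in T_*(φ) for some
isotone map φ ∈ Hom(P,[n]). -/
theorem stmt4 {n : ℕ} (hn : 0 < n) (F : Set (P × Fin n)) (hF : IsStaircaseFace F) :
    ∃ φ : P → Fin n, Monotone φ ∧ F ⊆ Tstar φ := by
  have : NeZero n := ⟨hn.ne'⟩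
  exact ⟨supBelow F, monotone_supBelow, fun x hx =>
    ⟨le_supBelow hx, fun _ hq => supBelow_le_of_lt hF hx hq⟩⟩
end

section
/- Let F be a face of the staircase complex 𝔅(P,n) whose projection onto P is surjective. Then there exists a unique isotone map φ ∈ Hom(P,[n]) with Γφ ⊆ F ⊆ T_*(φ); moreover this φ is given by φ(p) = max{ i : (p,i) ∈ F }. Consequently the staircase faces with surjective projection onto P are the disjoint union of the intervals [Γφ, T_*(φ)] as φ ranges over Hom(P,[n]). -/
variable {P : Type*} [PartialOrder P] [Fintype P]

/-- The graph `Γφ = {(p, φ p) | p ∈ P}` of a map φ : P → [n]. -/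
def graphOf {n : ℕ} (φ : P → Fin n) : Set (P × Fin n) :=
  {x | x.2 = φ x.1}

/-! The map φ of the theorem is forced to be `p ↦ max {i | (p, i) ∈ F}`: the graph gives `(p, φ p) ∈ F`
and `F ⊆ T_*(φ)` gives `i ≤ φ p` for every `(p, i) ∈ F`. Conversely, for this fibrewise maximum the
staircase condition, applied to `(q, φ q)` and `(p, i)` with `q < p`, gives both monotonicity and the
lower bounds `φ q ≤ i` defining `T_*(φ)`. -/

theorem exists_isGreatest_fiber {α β : Type*} [LinearOrder β] [Finite β] (F : Set (α × β))
    (hsurj : ∀ a, ∃ b, (a, b) ∈ F) : ∃ φ : α → β, ∀ a, IsGreatest {b | (a, b) ∈ F} (φ a) := by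
  have hfiber (a : α) : ∃ b, IsGreatest {b | (a, b) ∈ F} b := by
    obtain ⟨b, hb⟩ := hsurj a
    have hne : (Set.toFinite {b | (a, b) ∈ F}).toFinset.Nonempty := ⟨b, by simpa using hb⟩
    exact ⟨_, by simpa using Finset.isGreatest_max' _ hne⟩
  choose φ hφ using hfiber
  exact ⟨φ, hφ⟩

theorem graphOf_subset_iff {α : Type*} {n : ℕ} {F : Set (α × Fin n)} {φ : α → Fin n} :
    graphOf φ ⊆ F ↔ ∀ a, (a, φ a) ∈ F :=
  ⟨fun h a => h rfl, fun h x hx => by rw [show x = (x.1, φ x.1) from Prod.ext rfl hx]; exact h _⟩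

section

variable {Q : Type*} [PartialOrder Q] {n : ℕ} {F : Set (Q × Fin n)} {φ : Q → Fin n}

theorem isGreatest_of_graphOf_subset_of_subset_Tstar (hΓ : graphOf φ ⊆ F) (hT : F ⊆ Tstar φ)
    (q : Q) : IsGreatest {i | (q, i) ∈ F} (φ q) :=
  ⟨graphOf_subset_iff.1 hΓ q, fun _ hi => (hT hi).1⟩

theorem IsStaircaseFace.monotone_of_isGreatest (hF : IsStaircaseFace F)
    (hφ : ∀ q, IsGreatest {i | (q, i) ∈ F} (φ q)) : Monotone φ := by
  intro p q hpq
  rcases hpq.eq_or_lt with rfl | hlt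
  · exact le_rfl
  · exact not_lt.1 (hF _ (hφ p).1 _ (hφ q).1 hlt)

theorem IsStaircaseFace.subset_Tstar_of_isGreatest (hF : IsStaircaseFace F)
    (hφ : ∀ q, IsGreatest {i | (q, i) ∈ F} (φ q)) : F ⊆ Tstar φ :=
  fun x hx => ⟨(hφ x.1).2 hx, fun q hq => not_lt.1 (hF _ (hφ q).1 x hx hq)⟩

end

/-- Let F be a face of the staircase complex 𝔅(P,n) whose projection onto P is surjective.
Then there is a unique isotone map φ with Γφ ⊆ F ⊆ T_*(φ); moreover any such φ is given by
φ(p) = max{i : (p,i) ∈ F}.  Hence the staircase faces with surjective projection onto P are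
the disjoint union of the intervals [Γφ, T_*(φ)], φ ∈ Hom(P,[n]). -/
theorem stmt6 {n : ℕ} (F : Set (P × Fin n)) (hF : IsStaircaseFace F)
    (hsurj : ∀ p : P, ∃ i, (p, i) ∈ F) :
    (∃! φ : P → Fin n, Monotone φ ∧ graphOf φ ⊆ F ∧ F ⊆ Tstar φ) ∧
      (∀ φ : P → Fin n, Monotone φ → graphOf φ ⊆ F → F ⊆ Tstar φ →
        ∀ p : P, (p, φ p) ∈ F ∧ ∀ i : Fin n, (p, i) ∈ F → i ≤ φ p) := by
  obtain ⟨φ, hφ⟩ := exists_isGreatest_fiber F hsurj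
  refine ⟨⟨φ, ⟨hF.monotone_of_isGreatest hφ, graphOf_subset_iff.2 fun p => (hφ p).1,
    hF.subset_Tstar_of_isGreatest hφ⟩, ?_⟩,
    fun ψ _ hΓ hT p => isGreatest_of_graphOf_subset_of_subset_Tstar hΓ hT p⟩
  rintro ψ ⟨-, hΓ, hT⟩
  exact funext fun p => (isGreatest_of_graphOf_subset_of_subset_Tstar hΓ hT p).unique (hφ p)
end

section
/- Let J be a poset ideal in Hom(P,[n]). A subset F ⊆ P×[n] whose projection onto P is surjective is a face of the staircase complex 𝔅(J) associated with J if and only if Γφ ⊆ F ⊆ T_*(φ) for some φ ∈ J, and such φ is unique. In particular, for φ ∈ J and ψ ∈ Hom(P,[n]) \ J one has Γψ ⊄ T_*(φ). -/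
/-! For a staircase face `F` whose projection onto `P` is onto, the fibrewise maxima of `F` form
the unique isotone `φ` with `Γφ ⊆ F ⊆ T_*(φ)`. The key observation is that `Γψ ⊆ T_*(φ)` forces
`ψ ≤ φ`: so `F` avoids the graphs of all isotone maps outside the ideal `J` exactly when this `φ`
lies in `J`. -/

variable {P : Type*} [PartialOrder P] [Fintype P]

/-- A face of the staircase complex 𝔅(J) associated with a poset ideal J ⊆ Hom(P,[n]) is a
staircase face F such that Γψ ⊄ F for every isotone ψ ∉ J. -/
def IsFaceBJ {n : ℕ} (J : Set (P → Fin n)) (F : Set (P × Fin n)) : Prop :=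
  IsStaircaseFace F ∧ ∀ ψ : P → Fin n, Monotone ψ → ψ ∉ J → ¬ graphOf ψ ⊆ F

section

variable {α : Type*} {n : ℕ}

theorem mem_graphOf_self (φ : α → Fin n) (a : α) : (a, φ a) ∈ graphOf φ := rfl

variable [PartialOrder α]

theorem le_of_graphOf_subset_Tstar {φ ψ : α → Fin n} (h : graphOf ψ ⊆ Tstar φ) : ψ ≤ φ :=
  fun a => (h (mem_graphOf_self ψ a)).1

theorem monotone_of_graphOf_subset_Tstar {φ : α → Fin n} (h : graphOf φ ⊆ Tstar φ) :
    Monotone φ := by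
  intro a b hab
  rcases hab.eq_or_lt with rfl | hlt
  · exact le_rfl
  · exact (h (mem_graphOf_self φ b)).2 a hlt

theorem eq_of_graphOf_subset_of_subset_Tstar {φ φ' : α → Fin n} {F : Set (α × Fin n)}
    (hφ : graphOf φ ⊆ F) (hFφ : F ⊆ Tstar φ) (hφ' : graphOf φ' ⊆ F) (hFφ' : F ⊆ Tstar φ') :
    φ = φ' :=
  le_antisymm (le_of_graphOf_subset_Tstar (hφ.trans hFφ'))
    (le_of_graphOf_subset_Tstar (hφ'.trans hFφ))

theorem IsStaircaseFace.mono {F G : Set (α × Fin n)} (hG : IsStaircaseFace G) (hFG : F ⊆ G) :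
    IsStaircaseFace F :=
  fun x hx y hy => hG x (hFG hx) y (hFG hy)

theorem isStaircaseFace_Tstar (φ : α → Fin n) : IsStaircaseFace (Tstar φ) :=
  fun x hx _ hy hlt => not_lt.mpr (hx.1.trans (hy.2 x.1 hlt))

theorem IsStaircaseFace.exists_graphOf_subset_subset_Tstar {F : Set (α × Fin n)}
    (hF : IsStaircaseFace F) (hsurj : ∀ a, ∃ i, (a, i) ∈ F) :
    ∃ φ : α → Fin n, graphOf φ ⊆ F ∧ F ⊆ Tstar φ := by
  have fibre_max : ∀ a, ∃ i, (a, i) ∈ F ∧ ∀ j, (a, j) ∈ F → j ≤ i := fun a =>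
    Set.exists_max_image {i | (a, i) ∈ F} id (Set.toFinite _) (hsurj a)
  choose φ hφF hφmax using fibre_max
  refine ⟨φ, ?_, ?_⟩
  · rintro ⟨a, i⟩ (rfl : i = φ a)
    exact hφF a
  · rintro ⟨a, i⟩ hi
    exact ⟨hφmax a i hi, fun b hb => not_lt.mp (hF _ (hφF b) _ hi hb)⟩

end

theorem stmt7_general {n : ℕ} (J : Set (P → Fin n))
    (hJ2 : ∀ φ ∈ J, ∀ ψ : P → Fin n, Monotone ψ → ψ ≤ φ → ψ ∈ J)
    (F : Set (P × Fin n)) (hsurj : ∀ p : P, ∃ i, (p, i) ∈ F) :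
    (IsFaceBJ J F ↔ ∃ φ ∈ J, graphOf φ ⊆ F ∧ F ⊆ Tstar φ) ∧
      (∀ φ φ' : P → Fin n, φ ∈ J → φ' ∈ J →
        graphOf φ ⊆ F → F ⊆ Tstar φ → graphOf φ' ⊆ F → F ⊆ Tstar φ' → φ = φ') ∧
      (∀ φ ∈ J, ∀ ψ : P → Fin n, Monotone ψ → ψ ∉ J → ¬ graphOf ψ ⊆ Tstar φ) := by
  have avoid : ∀ φ ∈ J, ∀ ψ : P → Fin n, Monotone ψ → ψ ∉ J → ¬ graphOf ψ ⊆ Tstar φ :=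
    fun φ hφ ψ hψ hψJ h => hψJ (hJ2 φ hφ ψ hψ (le_of_graphOf_subset_Tstar h))
  refine ⟨⟨?_, ?_⟩, fun φ φ' _ _ => eq_of_graphOf_subset_of_subset_Tstar, avoid⟩
  · rintro ⟨hF, hJF⟩
    obtain ⟨φ, hφF, hFφ⟩ := hF.exists_graphOf_subset_subset_Tstar hsurj
    have hφ : Monotone φ := monotone_of_graphOf_subset_Tstar (hφF.trans hFφ)
    exact ⟨φ, not_not.mp fun hφJ => hJF φ hφ hφJ hφF, hφF, hFφ⟩
  · rintro ⟨φ, hφ, -, hFφ⟩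
    exact ⟨(isStaircaseFace_Tstar φ).mono hFφ,
      fun ψ hψ hψJ h => avoid φ hφ ψ hψ hψJ (h.trans hFφ)⟩

/-- Let J be a poset ideal in Hom(P,[n]).  A subset F of P × [n] with surjective projection
onto P is a face of 𝔅(J) iff Γφ ⊆ F ⊆ T_*(φ) for some φ ∈ J; such a φ is unique.  In
particular, for φ ∈ J and isotone ψ ∉ J one has Γψ ⊄ T_*(φ). -/
theorem stmt7 {n : ℕ} (J : Set (P → Fin n))
    (hJ1 : ∀ φ ∈ J, Monotone φ)
    (hJ2 : ∀ φ ∈ J, ∀ ψ : P → Fin n, Monotone ψ → ψ ≤ φ → ψ ∈ J)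
    (F : Set (P × Fin n)) (hsurj : ∀ p : P, ∃ i, (p, i) ∈ F) :
    (IsFaceBJ J F ↔ ∃ φ ∈ J, graphOf φ ⊆ F ∧ F ⊆ Tstar φ) ∧
      (∀ φ φ' : P → Fin n, φ ∈ J → φ' ∈ J →
        graphOf φ ⊆ F → F ⊆ Tstar φ → graphOf φ' ⊆ F → F ⊆ Tstar φ' → φ = φ') ∧
      (∀ φ ∈ J, ∀ ψ : P → Fin n, Monotone ψ → ψ ∉ J → ¬ graphOf ψ ⊆ Tstar φ) :=
  stmt7_general J hJ2 F hsurj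
end

section
/- Let J be a nonempty poset ideal in Hom(P,[n]) and let A ⊆ P×[n] be a subset whose projection onto P is surjective. Then the monomial m_A does not lie in the ideal B(J) if and only if: (i) A is a staircase face (A contains no pair (p,i),(q,j) with p < q and i > j), and (ii) the map φ_A defined by φ_A(p) = max{ j : (p,j) ∈ A } is isotone and belongs to J. -/
open MvPolynomial

variable {P : Type*} [PartialOrder P] [Fintype P] [DecidableEq P]

/-- The squarefree monomial `m_A = ∏_{(p,i) ∈ A} x_{p,i}`. -/
noncomputable def mA (k : Type*) [CommRing k] {n : ℕ} (A : Finset (P × Fin n)) :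
    MvPolynomial (P × Fin n) k :=
  ∏ a ∈ A, X a

/-- The graph `Γφ = {(p, φ p) | p ∈ P}` of a map φ : P → [n], as a finite set. -/
def GammaF {n : ℕ} (φ : P → Fin n) : Finset (P × Fin n) :=
  Finset.univ.image fun p => (p, φ p)

/-- The ideal B(J), generated by the monomials m_{Γψ} for isotone ψ ∉ J together with all
quadratic monomials x_{p,i} x_{q,j} with p < q in P and i > j in [n]. -/
noncomputable def BJ (k : Type*) [CommRing k] {n : ℕ} (J : Set (P → Fin n)) :
    Ideal (MvPolynomial (P × Fin n) k) :=
  Ideal.span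
    ({m | ∃ ψ : P → Fin n, Monotone ψ ∧ ψ ∉ J ∧ m = mA k (GammaF ψ)} ∪
      {m | ∃ (p q : P) (i j : Fin n), p < q ∧ j < i ∧ m = X (p, i) * X (q, j)})

/-
Both kinds of generators of B(J) are squarefree monomials, so m_A lies in B(J) exactly when A
contains the support of one of them: the graph of an isotone ψ ∉ J, or an inversion
{(p,i), (q,j)} with p < q and i > j. If A has no inversion, φ_A is isotone, and every isotone ψ
whose graph lies in A satisfies ψ ≤ φ_A; as J is downward closed, no such ψ avoids J as soon as
φ_A ∈ J.
-/

namespace MvPolynomial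

variable {σ R : Type*} [CommSemiring R] [Nontrivial R]

theorem prod_X_mem_span_image_prod_X_iff (A : Finset σ) (𝒮 : Set (Finset σ)) :
    ∏ a ∈ A, (X a : MvPolynomial σ R) ∈ Ideal.span ((fun B => ∏ b ∈ B, X b) '' 𝒮) ↔
      ∃ B ∈ 𝒮, B ⊆ A := by
  classical
  have prod_X_eq (B : Finset σ) :
      ∏ b ∈ B, (X b : MvPolynomial σ R) = monomial (∑ b ∈ B, Finsupp.single b 1) 1 :=
    (monomial_sum_one B _).symm
  have exponent_le_iff (B : Finset σ) :
      ∑ b ∈ B, Finsupp.single b 1 ≤ ∑ a ∈ A, Finsupp.single a 1 ↔ B ⊆ A := by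
    rw [← Finsupp.orderIsoMultiset.le_iff_le, Finsupp.coe_orderIsoMultiset,
      Finsupp.toMultiset_sum_single, Finsupp.toMultiset_sum_single, one_smul, one_smul,
      Finset.val_le_iff]
  simp_rw [prod_X_eq, ← Set.image_image (fun s => monomial s (1 : R))
      (fun B => ∑ b ∈ B, Finsupp.single b 1),
    mem_ideal_span_monomial_image, support_monomial, if_neg one_ne_zero,
    Finset.mem_singleton, forall_eq, Set.exists_mem_image, exponent_le_iff]

end MvPolynomial

section

variable {n : ℕ}

omit [PartialOrder P] in
theorem GammaF_subset_iff {ψ : P → Fin n} {A : Finset (P × Fin n)} :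
    GammaF ψ ⊆ A ↔ ∀ p, (p, ψ p) ∈ A := by
  simp [GammaF, Finset.image_subset_iff]

omit [PartialOrder P] [Fintype P] in
theorem X_mul_X_eq_mA (k : Type*) [CommRing k] {p q : P} (hpq : p ≠ q) (i j : Fin n) :
    X (p, i) * X (q, j) = mA k {(p, i), (q, j)} := by
  rw [mA, Finset.prod_pair (by simp [hpq])]

theorem BJ_eq_span_image_mA (k : Type*) [CommRing k] (J : Set (P → Fin n)) :
    BJ k J = Ideal.span (mA k '' ({B | ∃ ψ : P → Fin n, Monotone ψ ∧ ψ ∉ J ∧ B = GammaF ψ} ∪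
      {B | ∃ (p q : P) (i j : Fin n), p < q ∧ j < i ∧ B = {(p, i), (q, j)}})) := by
  rw [BJ, Set.image_union]
  congr 2 <;> ext m <;> simp only [Set.mem_image, Set.mem_ofPred_eq]
  · constructor
    · rintro ⟨ψ, hψ, hψJ, rfl⟩
      exact ⟨_, ⟨ψ, hψ, hψJ, rfl⟩, rfl⟩
    · rintro ⟨_, ⟨ψ, hψ, hψJ, rfl⟩, rfl⟩
      exact ⟨ψ, hψ, hψJ, rfl⟩
  · constructor
    · rintro ⟨p, q, i, j, hpq, hji, rfl⟩
      exact ⟨_, ⟨p, q, i, j, hpq, hji, rfl⟩, (X_mul_X_eq_mA k hpq.ne i j).symm⟩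
    · rintro ⟨_, ⟨p, q, i, j, hpq, hji, rfl⟩, rfl⟩
      exact ⟨p, q, i, j, hpq, hji, (X_mul_X_eq_mA k hpq.ne i j).symm⟩

theorem mA_notMem_BJ_iff (k : Type*) [CommRing k] [Nontrivial k] (J : Set (P → Fin n))
    (A : Finset (P × Fin n)) :
    mA k A ∉ BJ k J ↔ (∀ ψ : P → Fin n, Monotone ψ → GammaF ψ ⊆ A → ψ ∈ J) ∧
      ∀ x ∈ A, ∀ y ∈ A, x.1 < y.1 → ¬ y.2 < x.2 := by
  rw [BJ_eq_span_image_mA]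
  refine (MvPolynomial.prod_X_mem_span_image_prod_X_iff A _).not.trans ?_
  simp only [Set.mem_union, Set.mem_ofPred_eq, not_exists, not_and, Prod.forall]
  constructor
  · intro h
    refine ⟨fun ψ hψ hsub => by_contra fun hψJ => h _ (.inl ⟨ψ, hψ, hψJ, rfl⟩) hsub, ?_⟩
    intro p i hpi q j hqj hpq hji
    exact h _ (.inr ⟨p, q, i, j, hpq, hji, rfl⟩) (by simp [Finset.insert_subset_iff, hpi, hqj])
  · rintro ⟨hJ, hstair⟩ B (⟨ψ, hψ, hψJ, rfl⟩ | ⟨p, q, i, j, hpq, hji, rfl⟩) hsub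
    · exact hψJ (hJ ψ hψ hsub)
    · rw [Finset.insert_subset_iff, Finset.singleton_subset_iff] at hsub
      exact hstair p i hsub.1 q j hsub.2 hpq hji

omit [Fintype P] [DecidableEq P] in
theorem monotone_of_staircase {A : Finset (P × Fin n)} {φ : P → Fin n}
    (hφ : ∀ p, (p, φ p) ∈ A) (hstair : ∀ x ∈ A, ∀ y ∈ A, x.1 < y.1 → ¬ y.2 < x.2) :
    Monotone φ := by
  intro p q hpq
  rcases hpq.eq_or_lt with rfl | hlt
  · exact le_rfl
  · exact not_lt.mp (hstair _ (hφ p) _ (hφ q) hlt)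

end

theorem stmt10_general (k : Type*) [Field k] {n : ℕ} (J : Set (P → Fin n))
    (hJ2 : ∀ φ ∈ J, ∀ ψ : P → Fin n, Monotone ψ → ψ ≤ φ → ψ ∈ J)
    (A : Finset (P × Fin n))
    (φA : P → Fin n)
    (hφA : ∀ p : P, (p, φA p) ∈ A ∧ ∀ i : Fin n, (p, i) ∈ A → i ≤ φA p) :
    mA k A ∉ BJ k J ↔
      ((∀ x ∈ A, ∀ y ∈ A, x.1 < y.1 → ¬ y.2 < x.2) ∧ Monotone φA ∧ φA ∈ J) := by
  rw [mA_notMem_BJ_iff]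
  constructor
  · rintro ⟨hJ, hstair⟩
    have hmono := monotone_of_staircase (fun p => (hφA p).1) hstair
    exact ⟨hstair, hmono, hJ φA hmono (GammaF_subset_iff.mpr fun p => (hφA p).1)⟩
  · rintro ⟨hstair, -, hφJ⟩
    refine ⟨fun ψ hψ hsub => hJ2 φA hφJ ψ hψ fun p => ?_, hstair⟩
    exact (hφA p).2 _ (GammaF_subset_iff.mp hsub p)

/-- Let J be a nonempty poset ideal in Hom(P,[n]) and A ⊆ P × [n] a subset whose projection
onto P is surjective.  Then m_A ∉ B(J) iff (i) A is a staircase face and (ii) the map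
φ_A, φ_A(p) = max{j : (p,j) ∈ A}, is isotone and belongs to J. -/
theorem stmt10 (k : Type*) [Field k] {n : ℕ} (J : Set (P → Fin n))
    (hJ1 : ∀ φ ∈ J, Monotone φ)
    (hJ2 : ∀ φ ∈ J, ∀ ψ : P → Fin n, Monotone ψ → ψ ≤ φ → ψ ∈ J)
    (hJne : J.Nonempty)
    (A : Finset (P × Fin n)) (hsurj : ∀ p : P, ∃ i, (p, i) ∈ A)
    (φA : P → Fin n)
    (hφA : ∀ p : P, (p, φA p) ∈ A ∧ ∀ i : Fin n, (p, i) ∈ A → i ≤ φA p) :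
    mA k A ∉ BJ k J ↔
      ((∀ x ∈ A, ∀ y ∈ A, x.1 < y.1 → ¬ y.2 < x.2) ∧ Monotone φA ∧ φA ∈ J) :=
  stmt10_general k J hJ2 A φA hφA
end

section
/- Let J be a nonempty poset ideal in Hom(P,[n]). Consider the S-linear map ε : ⊕_{φ∈J} S·e_φ → S/B(J) from the free S-module with basis {e_φ : φ ∈ J}, sending e_φ to the residue class of m_{Γφ}. Then the kernel of ε is generated, as an S-module, by the following elements: (i) x_{p,i}·e_φ for φ ∈ J and (p,i) ∈ P×[n] such that x_{p,i}·m_{Γφ} ∈ B(J); and (ii) x_{p,ψ(p)}·e_φ − x_{p,φ(p)}·e_ψ for φ, ψ ∈ J and p ∈ P such that φ(p) < ψ(p) and φ(q) = ψ(q) for all q ≠ p. -/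
/-!
Give the basis element `e_φ` the multidegree `graphDeg φ` of `m_{Γφ}`. Since `B(J)` is a monomial
ideal, `ker ε` is spanned by its multihomogeneous parts, and a part of degree `w` is a combination
of the terms `x^(w - Γφ) e_φ` over the `φ ∈ J` whose graph lies below `w`.

If `x^w ∉ B(J)`, every map whose graph lies below `w` is isotone and in `J`, and the coefficients of
the part sum to zero; so it is a sum of differences of two such terms, and any two are joined by a
chain of relations (ii) changing one value at a time. If `x^w ∈ B(J)`, then `w` lies above either
the graph of a map `χ₀ ∉ J`, and moving `φ` towards `χ₀` one value at a time by relations (ii) must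
reach a relation (i), or above an inversion `x_{p,i} x_{q,j}`, where relation (i) applies to `e_φ`
directly or after lowering `φ` at `q` inside the poset ideal `J`.
-/

open MvPolynomial

variable {P : Type*} [PartialOrder P] [Fintype P] [DecidableEq P]

theorem Function.induction_update_toward {ι κ : Type*} [Fintype ι] [DecidableEq ι]
    (target : ι → κ) {C : (ι → κ) → Prop} (base : C target)
    (step : ∀ φ p, φ p ≠ target p → C (Function.update φ p (target p)) → C φ) (φ : ι → κ) :
    C φ := by
  suffices ∀ s : Finset ι, ∀ φ, (∀ p ∉ s, φ p = target p) → C φ from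
    this Finset.univ φ (by simp)
  intro s
  induction s using Finset.induction_on with
  | empty =>
    intro φ h
    obtain rfl : φ = target := funext fun p => h p (Finset.notMem_empty p)
    exact base
  | insert a s _ ih =>
    intro φ h
    by_cases ha : φ a = target a
    · refine ih φ fun p hp => ?_
      by_cases hpa : p = a
      · rwa [hpa]
      · exact h p (by simp [hpa, hp])
    · refine step φ a ha (ih _ fun p hp => ?_)
      by_cases hpa : p = a
      · rw [hpa, Function.update_self]
      · rw [Function.update_of_ne hpa]
        exact h p (by simp [hpa, hp])

theorem AddSubgroup.sum_mem_of_sum_eq_zero {ι A M : Type*} [AddCommMonoid A] [AddCommGroup M]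
    (N : AddSubgroup M) (T : ι → A →+ M) {s : Finset ι} {c : ι → A}
    (hc : ∑ i ∈ s, c i = 0) (hT : ∀ i ∈ s, ∀ j ∈ s, ∀ a, T i a - T j a ∈ N) :
    ∑ i ∈ s, T i (c i) ∈ N := by
  obtain rfl | ⟨j, hj⟩ := s.eq_empty_or_nonempty
  · simp
  have : ∑ i ∈ s, T i (c i) = ∑ i ∈ s, (T i (c i) - T j (c i)) := by
    rw [Finset.sum_sub_distrib, ← map_sum, hc, map_zero, sub_zero]
  rw [this]
  exact N.sum_mem fun i hi => hT i hi j hj (c i)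

theorem Finsupp.mem_ker_linearCombination_mk_iff {ι S : Type*} [CommRing S] (I : Ideal S)
    (v : ι → S) (f : ι →₀ S) :
    f ∈ LinearMap.ker (Finsupp.linearCombination S fun i => Ideal.Quotient.mk I (v i)) ↔
      Finsupp.linearCombination S v f ∈ I := by
  rw [LinearMap.mem_ker, ← Ideal.Quotient.eq_zero_iff_mem]
  have := Finsupp.apply_linearCombination S (Ideal.Quotient.mkₐ S I).toLinearMap v f
  simp only [AlgHom.toLinearMap_apply, Ideal.Quotient.mkₐ_eq_mk] at this
  rw [this]
  rfl

theorem Monotone.update_of_le {ι κ : Type*} [PartialOrder ι] [Preorder κ] [DecidableEq ι]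
    {f : ι → κ} (hf : Monotone f) {q : ι} {j : κ} (hlo : ∀ r < q, f r ≤ j) (hhi : j ≤ f q) :
    Monotone (Function.update f q j) := by
  intro r r' h
  rcases eq_or_ne r' q with rfl | hr'
  · rcases eq_or_ne r r' with rfl | hr
    · exact le_rfl
    · rw [Function.update_self, Function.update_of_ne hr]
      exact hlo r (lt_of_le_of_ne h hr)
  · rw [Function.update_of_ne hr']
    rcases eq_or_ne r q with rfl | hr
    · rw [Function.update_self]
      exact hhi.trans (hf h)
    · rw [Function.update_of_ne hr]
      exact hf h

section graphDeg

variable {ι κ : Type*} [Fintype ι]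

noncomputable def graphDeg (φ : ι → κ) : ι × κ →₀ ℕ := ∑ p, Finsupp.single (p, φ p) 1

theorem graphDeg_apply [DecidableEq κ] (φ : ι → κ) (q : ι) (j : κ) :
    graphDeg φ (q, j) = if φ q = j then 1 else 0 := by
  classical
  rw [graphDeg, Finsupp.finsetSum_apply, Finset.sum_eq_single q]
  · simp [Finsupp.single_apply, eq_comm]
  · intro p _ hpq
    simp [Ne.symm hpq]
  · simp

theorem graphDeg_apply_self (φ : ι → κ) (p : ι) : graphDeg φ (p, φ p) = 1 := by
  classical
  simp [graphDeg_apply]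

theorem graphDeg_apply_of_ne {φ : ι → κ} {p : ι} {j : κ} (h : φ p ≠ j) :
    graphDeg φ (p, j) = 0 := by
  classical
  simp [graphDeg_apply, h]

theorem graphDeg_le_iff {φ : ι → κ} {w : ι × κ →₀ ℕ} :
    graphDeg φ ≤ w ↔ ∀ p, 1 ≤ w (p, φ p) := by
  classical
  refine ⟨fun h p => graphDeg_apply_self φ p ▸ h (p, φ p), fun h ⟨q, j⟩ => ?_⟩
  rw [graphDeg_apply]
  split_ifs with hq
  · exact hq ▸ h q
  · exact Nat.zero_le _

theorem single_add_single_le_graphDeg {φ : ι → κ} {p q : ι} (hpq : p ≠ q) :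
    Finsupp.single (p, φ p) 1 + Finsupp.single (q, φ q) 1 ≤ graphDeg φ := by
  classical
  calc _ = ∑ r ∈ {p, q}, Finsupp.single (r, φ r) 1 := (Finset.sum_pair hpq).symm
    _ ≤ graphDeg φ := Finset.sum_le_univ_sum_of_nonneg fun _ => zero_le

theorem graphDeg_add_single_eq [DecidableEq ι] {φ ψ : ι → κ} {p : ι}
    (h : ∀ q, q ≠ p → φ q = ψ q) :
    graphDeg φ + Finsupp.single (p, ψ p) 1 = graphDeg ψ + Finsupp.single (p, φ p) 1 := by
  have hsplit : ∀ χ : ι → κ, graphDeg χ =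
      ∑ q ∈ Finset.univ.erase p, Finsupp.single (q, χ q) 1 + Finsupp.single (p, χ p) 1 :=
    fun χ => (Finset.sum_erase_add _ _ (Finset.mem_univ p)).symm
  rw [hsplit φ, hsplit ψ,
    Finset.sum_congr rfl fun q hq => by rw [h q (Finset.ne_of_mem_erase hq)]]
  abel

theorem graphDeg_update_le [DecidableEq ι] (φ : ι → κ) (p : ι) (j : κ) :
    graphDeg (Function.update φ p j) ≤ Finsupp.single (p, j) 1 + graphDeg φ := by
  have := graphDeg_add_single_eq (φ := Function.update φ p j) (ψ := φ) (p := p)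
    fun q hq => Function.update_of_ne hq _ _
  calc graphDeg (Function.update φ p j)
      ≤ graphDeg (Function.update φ p j) + Finsupp.single (p, φ p) 1 := le_self_add
    _ = Finsupp.single (p, j) 1 + graphDeg φ := by rw [this, Function.update_self, add_comm]

theorem graphDeg_le_of_update [DecidableEq ι] {φ : ι → κ} {w : ι × κ →₀ ℕ}
    (hφ : graphDeg φ ≤ w) {p : ι} {j : κ} (hj : 1 ≤ w (p, j)) :
    graphDeg (Function.update φ p j) ≤ w := by
  rw [graphDeg_le_iff] at hφ ⊢
  intro q
  by_cases hq : q = p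
  · subst hq; simpa using hj
  · simpa [Function.update_of_ne hq] using hφ q

theorem graphDeg_add_single_le {φ : ι → κ} {w : ι × κ →₀ ℕ}
    (hφ : graphDeg φ ≤ w) {p : ι} {j : κ} (hp : φ p ≠ j) (hj : 1 ≤ w (p, j)) :
    graphDeg φ + Finsupp.single (p, j) 1 ≤ w := by
  classical
  intro a
  rw [Finsupp.add_apply, Finsupp.single_apply]
  split_ifs with ha
  · rw [← ha, graphDeg_apply_of_ne hp]; simpa using hj
  · exact (add_zero (graphDeg φ a)).symm ▸ hφ a

theorem one_le_tsub_graphDeg {φ : ι → κ} {w : ι × κ →₀ ℕ}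
    {p : ι} {j : κ} (hp : φ p ≠ j) (hj : 1 ≤ w (p, j)) : 1 ≤ (w - graphDeg φ) (p, j) := by
  rwa [Finsupp.tsub_apply, graphDeg_apply_of_ne hp, tsub_zero]

theorem single_le_graphDeg (φ : ι → κ) (p : ι) :
    Finsupp.single (p, φ p) 1 ≤ graphDeg φ :=
  Finsupp.single_le_iff.2 (graphDeg_apply_self φ p).ge

end graphDeg

section gradedPart

variable {σ ι R : Type*} [CommSemiring R] (deg : ι → σ →₀ ℕ)

noncomputable def gradedPart (w : σ →₀ ℕ) (f : ι →₀ MvPolynomial σ R) :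
    ι →₀ MvPolynomial σ R :=
  ∑ i ∈ f.support with deg i ≤ w,
    Finsupp.single i (monomial (w - deg i) (coeff (w - deg i) (f i)))

theorem sum_gradedPart [DecidableEq σ] (f : ι →₀ MvPolynomial σ R) :
    ∑ w ∈ f.support.biUnion (fun i => (f i).support.image (· + deg i)), gradedPart deg w f = f := by
  set W := f.support.biUnion (fun i => (f i).support.image (· + deg i))
  have hpart : ∀ i ∈ f.support,
      ∑ w ∈ W with deg i ≤ w, monomial (w - deg i) (coeff (w - deg i) (f i)) = f i := by
    intro i hi
    have hsub : (f i).support.image (· + deg i) ⊆ W.filter (deg i ≤ ·) := by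
      intro w hw
      obtain ⟨u, -, rfl⟩ := Finset.mem_image.1 hw
      exact Finset.mem_filter.2 ⟨Finset.mem_biUnion.2 ⟨i, hi, hw⟩, le_add_self⟩
    rw [← Finset.sum_subset hsub, Finset.sum_image (fun _ _ _ _ => add_right_cancel)]
    · simp_rw [add_tsub_cancel_right]
      exact (as_sum (f i)).symm
    · intro w hw hw'
      have hle := (Finset.mem_filter.1 hw).2
      rw [notMem_support_iff.1 fun h => hw' (Finset.mem_image.2 ⟨_, h, tsub_add_cancel_of_le hle⟩),
        map_zero]
  unfold gradedPart
  simp_rw [Finset.sum_filter]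
  rw [Finset.sum_comm]
  conv_rhs => rw [← f.sum_single]
  refine Finset.sum_congr rfl fun i hi => ?_
  conv_rhs => rw [← hpart i hi, Finsupp.single_finsetSum, Finset.sum_filter]

theorem coeff_linearCombination_monomial (f : ι →₀ MvPolynomial σ R) (w : σ →₀ ℕ) :
    coeff w (Finsupp.linearCombination (MvPolynomial σ R) (fun i => monomial (deg i) 1) f) =
      ∑ i ∈ f.support with deg i ≤ w, coeff (w - deg i) (f i) := by
  classical
  rw [Finsupp.linearCombination_apply, Finsupp.sum, coeff_sum, Finset.sum_filter]
  refine Finset.sum_congr rfl fun i _ => ?_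
  rw [smul_eq_mul, coeff_mul_monomial', mul_one]

end gradedPart

section bjExponents

variable {ι κ : Type*} [Fintype ι]

def bjExponents [Preorder ι] [Preorder κ] (J : Set (ι → κ)) : Set (ι × κ →₀ ℕ) :=
  {d | ∃ ψ : ι → κ, Monotone ψ ∧ ψ ∉ J ∧ d = graphDeg ψ} ∪
    {d | ∃ (p q : ι) (i j : κ), p < q ∧ j < i ∧
      d = Finsupp.single (p, i) 1 + Finsupp.single (q, j) 1}

theorem exists_bjExponents_le_graphDeg [PartialOrder ι] [LinearOrder κ] {J : Set (ι → κ)}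
    {χ : ι → κ} (hχ : χ ∉ J) : ∃ d ∈ bjExponents J, d ≤ graphDeg χ := by
  by_cases hmono : Monotone χ
  · exact ⟨_, Or.inl ⟨χ, hmono, hχ, rfl⟩, le_rfl⟩
  obtain ⟨r, s, hrs, hlt⟩ : ∃ r s, r ≤ s ∧ χ s < χ r := by
    simpa [Monotone] using hmono
  have hne : r ≠ s := by rintro rfl; exact lt_irrefl _ hlt
  exact ⟨_, Or.inr ⟨r, s, χ r, χ s, lt_of_le_of_ne hrs hne, hlt, rfl⟩,
    single_add_single_le_graphDeg hne⟩

theorem mem_of_graphDeg_le [PartialOrder ι] [LinearOrder κ] {J : Set (ι → κ)}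
    {w : ι × κ →₀ ℕ} (hw : ¬∃ d ∈ bjExponents J, d ≤ w) {χ : ι → κ}
    (hχ : graphDeg χ ≤ w) : χ ∈ J := by
  by_contra hχJ
  obtain ⟨d, hd, hle⟩ := exists_bjExponents_le_graphDeg hχJ
  exact hw ⟨d, hd, hle.trans hχ⟩

end bjExponents

section mA

variable {ι : Type*} [Fintype ι] [DecidableEq ι] (k : Type*) [CommRing k] {n : ℕ}

theorem mA_GammaF (φ : ι → Fin n) : mA k (GammaF φ) = monomial (graphDeg φ) 1 := by
  rw [mA, GammaF, Finset.prod_image fun p _ q _ h => (Prod.ext_iff.1 h).1, graphDeg,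
    monomial_sum_one]
  rfl

theorem X_mul_mA_GammaF (a : ι × Fin n) (φ : ι → Fin n) :
    X a * mA k (GammaF φ) = monomial (Finsupp.single a 1 + graphDeg φ) 1 := by
  rw [mA_GammaF, X, monomial_mul, one_mul]

end mA

section BJ

variable (k : Type*) [CommRing k] {n : ℕ} (J : Set (P → Fin n))

theorem BJ_eq_span_monomial :
    BJ k J = Ideal.span ((fun d => monomial d (1 : k)) '' bjExponents J) := by
  rw [BJ, bjExponents, Set.image_union]
  congr 2
  · ext m
    simp only [Set.mem_ofPred_eq, Set.mem_image]
    constructor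
    · rintro ⟨ψ, hψ, hψJ, rfl⟩
      exact ⟨_, ⟨ψ, hψ, hψJ, rfl⟩, (mA_GammaF k ψ).symm⟩
    · rintro ⟨_, ⟨ψ, hψ, hψJ, rfl⟩, rfl⟩
      exact ⟨ψ, hψ, hψJ, (mA_GammaF k ψ).symm⟩
  · ext m
    simp only [Set.mem_ofPred_eq, Set.mem_image, X, monomial_mul, one_mul]
    constructor
    · rintro ⟨p, q, i, j, hpq, hji, rfl⟩
      exact ⟨_, ⟨p, q, i, j, hpq, hji, rfl⟩, rfl⟩
    · rintro ⟨_, ⟨p, q, i, j, hpq, hji, rfl⟩, rfl⟩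
      exact ⟨p, q, i, j, hpq, hji, rfl⟩

theorem mem_BJ_iff {f : MvPolynomial (P × Fin n) k} :
    f ∈ BJ k J ↔ ∀ w ∈ f.support, ∃ d ∈ bjExponents J, d ≤ w := by
  rw [BJ_eq_span_monomial, mem_ideal_span_monomial_image]

theorem monomial_mem_BJ {w : P × Fin n →₀ ℕ} (hw : ∃ d ∈ bjExponents J, d ≤ w) (c : k) :
    monomial w c ∈ BJ k J :=
  (mem_BJ_iff k J).2 fun _ hv => Finset.mem_singleton.1 (support_monomial_subset hv) ▸ hw

end BJ

section syzygy

variable (k : Type*) [CommRing k] {n : ℕ} (J : Set (P → Fin n))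

def syzygyGens : Set (↥J →₀ MvPolynomial (P × Fin n) k) :=
  {v | ∃ (φ : ↥J) (p : P) (i : Fin n),
      X (p, i) * mA k (GammaF φ.1) ∈ BJ k J ∧ v = Finsupp.single φ (X (p, i))} ∪
    {v | ∃ (φ ψ : ↥J) (p : P),
      φ.1 p < ψ.1 p ∧ (∀ q : P, q ≠ p → φ.1 q = ψ.1 q) ∧
      v = Finsupp.single φ (X (p, ψ.1 p)) - Finsupp.single ψ (X (p, φ.1 p))}

noncomputable abbrev syzygySpan :
    Submodule (MvPolynomial (P × Fin n) k) (↥J →₀ MvPolynomial (P × Fin n) k) :=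
  Submodule.span _ (syzygyGens k J)

variable {k J}

theorem single_monomial_mem_span {φ : ↥J} {a : P × Fin n}
    (ha : ∃ d ∈ bjExponents J, d ≤ Finsupp.single a 1 + graphDeg φ.1)
    {u : P × Fin n →₀ ℕ} (hu : 1 ≤ u a) (c : k) :
    Finsupp.single φ (monomial u c) ∈ syzygySpan k J := by
  have hgen : Finsupp.single φ (X a) ∈ syzygyGens k J :=
    Or.inl ⟨φ, a.1, a.2, by simpa [X_mul_mA_GammaF] using monomial_mem_BJ k J ha 1, rfl⟩
  have : Finsupp.single φ (monomial u c) =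
      monomial (u - Finsupp.single a 1) c • Finsupp.single φ (X a) := by
    rw [Finsupp.smul_single, smul_eq_mul, X, monomial_mul, mul_one,
      tsub_add_cancel_of_le (Finsupp.single_le_iff.2 hu)]
  rw [this]
  exact Submodule.smul_mem _ _ (Submodule.subset_span hgen)

theorem single_X_sub_single_X_mem_span {φ ψ : ↥J} {p : P} (hne : φ.1 p ≠ ψ.1 p)
    (hagree : ∀ q, q ≠ p → φ.1 q = ψ.1 q) :
    Finsupp.single φ (X (p, ψ.1 p)) - Finsupp.single ψ (X (p, φ.1 p)) ∈
      syzygySpan k J := by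
  rcases hne.lt_or_gt with h | h
  · exact Submodule.subset_span (Or.inr ⟨φ, ψ, p, h, hagree, rfl⟩)
  · rw [← neg_sub]
    exact neg_mem (Submodule.subset_span
      (Or.inr ⟨ψ, φ, p, h, fun q hq => (hagree q hq).symm, rfl⟩))

theorem single_sub_single_mem_span_of_agree {φ ψ : ↥J} {p : P} (hne : φ.1 p ≠ ψ.1 p)
    (hagree : ∀ q, q ≠ p → φ.1 q = ψ.1 q) {w : P × Fin n →₀ ℕ}
    (hφ : graphDeg φ.1 ≤ w) (hψ : graphDeg ψ.1 ≤ w) (c : k) :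
    Finsupp.single φ (monomial (w - graphDeg φ.1) c) -
        Finsupp.single ψ (monomial (w - graphDeg ψ.1) c) ∈
      syzygySpan k J := by
  have hexch := graphDeg_add_single_eq hagree
  have hle : graphDeg φ.1 + Finsupp.single (p, ψ.1 p) 1 ≤ w :=
    graphDeg_add_single_le hφ hne (graphDeg_le_iff.1 hψ p)
  have hcancel : ∀ (D : P × Fin n →₀ ℕ) (a : P × Fin n), D + Finsupp.single a 1 ≤ w →
      w - (D + Finsupp.single a 1) + Finsupp.single a 1 = w - D := fun D a h => by
    rw [tsub_add_eq_tsub_tsub, tsub_add_cancel_of_le (le_tsub_of_add_le_left h)]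
  have : Finsupp.single φ (monomial (w - graphDeg φ.1) c) -
        Finsupp.single ψ (monomial (w - graphDeg ψ.1) c) =
      monomial (w - (graphDeg φ.1 + Finsupp.single (p, ψ.1 p) 1)) c •
        (Finsupp.single φ (X (p, ψ.1 p)) - Finsupp.single ψ (X (p, φ.1 p))) := by
    rw [smul_sub, Finsupp.smul_single, Finsupp.smul_single, smul_eq_mul, smul_eq_mul, X, X,
      monomial_mul, monomial_mul, mul_one, hcancel _ _ hle, hexch, hcancel _ _ (hexch ▸ hle)]
  rw [this]
  exact Submodule.smul_mem _ _ (single_X_sub_single_X_mem_span hne hagree)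

variable {w : P × Fin n →₀ ℕ}

theorem single_sub_single_mem_span_of_not_exists_le (hw : ¬∃ d ∈ bjExponents J, d ≤ w)
    {φ ψ : ↥J} (hφ : graphDeg φ.1 ≤ w) (hψ : graphDeg ψ.1 ≤ w) (c : k) :
    Finsupp.single φ (monomial (w - graphDeg φ.1) c) -
        Finsupp.single ψ (monomial (w - graphDeg ψ.1) c) ∈ syzygySpan k J := by
  revert hφ
  refine Function.induction_update_toward ψ.1
    (C := fun χ => ∀ hχJ : χ ∈ J, graphDeg χ ≤ w →
      Finsupp.single ⟨χ, hχJ⟩ (monomial (w - graphDeg χ) c) -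
        Finsupp.single ψ (monomial (w - graphDeg ψ.1) c) ∈ syzygySpan k J)
    (fun _ _ => by simp) ?_ φ.1 φ.2
  intro χ p hp ih hχJ hχ
  have hχ' : graphDeg (Function.update χ p (ψ.1 p)) ≤ w :=
    graphDeg_le_of_update hχ (graphDeg_le_iff.1 hψ p)
  have hstep := single_sub_single_mem_span_of_agree (φ := ⟨χ, hχJ⟩)
    (ψ := ⟨_, mem_of_graphDeg_le hw hχ'⟩) (p := p) (by simpa using hp)
    (fun q hq => (Function.update_of_ne hq _ _).symm) hχ hχ' c
  simpa using add_mem hstep (ih (mem_of_graphDeg_le hw hχ') hχ')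

theorem single_mem_span_of_graphDeg_le {χ₀ : P → Fin n} (hχ₀J : χ₀ ∉ J)
    (hχ₀ : graphDeg χ₀ ≤ w) {φ : ↥J} (hφ : graphDeg φ.1 ≤ w) (c : k) :
    Finsupp.single φ (monomial (w - graphDeg φ.1) c) ∈ syzygySpan k J := by
  revert hφ
  refine Function.induction_update_toward χ₀
    (C := fun χ => ∀ hχJ : χ ∈ J, graphDeg χ ≤ w →
      Finsupp.single ⟨χ, hχJ⟩ (monomial (w - graphDeg χ) c) ∈ syzygySpan k J)
    (fun h => absurd h hχ₀J) ?_ φ.1 φ.2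
  intro χ p hp ih hχJ hχ
  have hχ₀p := graphDeg_le_iff.1 hχ₀ p
  have hχ' : graphDeg (Function.update χ p (χ₀ p)) ≤ w := graphDeg_le_of_update hχ hχ₀p
  by_cases hχ'J : Function.update χ p (χ₀ p) ∈ J
  · have hstep := single_sub_single_mem_span_of_agree (φ := ⟨χ, hχJ⟩) (ψ := ⟨_, hχ'J⟩) (p := p)
      (by simpa using hp) (fun q hq => (Function.update_of_ne hq _ _).symm) hχ hχ' c
    simpa using add_mem hstep (ih hχ'J hχ')
  · obtain ⟨d, hd, hle⟩ := exists_bjExponents_le_graphDeg hχ'J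
    exact single_monomial_mem_span (φ := ⟨χ, hχJ⟩)
      ⟨d, hd, hle.trans (graphDeg_update_le χ p (χ₀ p))⟩
      (one_le_tsub_graphDeg hp hχ₀p) c

theorem single_mem_span_of_apply_lt (hJmono : ∀ φ ∈ J, Monotone φ)
    {p q : P} {i : Fin n} (hpq : p < q) (hwi : 1 ≤ w (p, i))
    {φ : ↥J} (hφq : φ.1 q < i) (c : k) :
    Finsupp.single φ (monomial (w - graphDeg φ.1) c) ∈ syzygySpan k J :=
  single_monomial_mem_span
    ⟨_, Or.inr ⟨p, q, i, φ.1 q, hpq, hφq, rfl⟩, add_le_add le_rfl (single_le_graphDeg φ.1 q)⟩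
    (one_le_tsub_graphDeg ((hJmono φ.1 φ.2 hpq.le).trans_lt hφq).ne hwi) c

theorem single_mem_span_of_inversion (hJmono : ∀ φ ∈ J, Monotone φ)
    (hJlower : ∀ φ ∈ J, ∀ ψ : P → Fin n, Monotone ψ → ψ ≤ φ → ψ ∈ J)
    {p q : P} {i j : Fin n} (hpq : p < q) (hji : j < i) (hwi : 1 ≤ w (p, i)) (hwj : 1 ≤ w (q, j))
    {φ : ↥J} (hφ : graphDeg φ.1 ≤ w) (c : k) :
    Finsupp.single φ (monomial (w - graphDeg φ.1) c) ∈ syzygySpan k J := by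
  by_cases hφq : φ.1 q < i
  · exact single_mem_span_of_apply_lt hJmono hpq hwi hφq c
  push Not at hφq
  have hφqj : φ.1 q ≠ j := (hji.trans_le hφq).ne'
  by_cases hlo : ∃ r < q, j < φ.1 r
  · obtain ⟨r, hrq, hjr⟩ := hlo
    refine single_monomial_mem_span ⟨_, Or.inr ⟨r, q, φ.1 r, j, hrq, hjr, rfl⟩, ?_⟩
      (one_le_tsub_graphDeg hφqj hwj) c
    rw [add_comm]
    exact add_le_add le_rfl (single_le_graphDeg φ.1 r)
  push Not at hlo
  -- lowering `φ` at `q` to `j` stays in the poset ideal `J`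
  have hmono := (hJmono φ.1 φ.2).update_of_le hlo (hji.trans_le hφq).le
  have hψJ := hJlower φ.1 φ.2 _ hmono
    (update_le_iff.2 ⟨(hji.trans_le hφq).le, fun _ _ => le_rfl⟩)
  have hψ : graphDeg (Function.update φ.1 q j) ≤ w := graphDeg_le_of_update hφ hwj
  have hstep := single_sub_single_mem_span_of_agree (φ := φ) (ψ := ⟨_, hψJ⟩) (p := q)
    (by simpa using hφqj) (fun r hr => (Function.update_of_ne hr _ _).symm) hφ hψ c
  simpa using add_mem hstep
    (single_mem_span_of_apply_lt (φ := ⟨_, hψJ⟩) hJmono hpq hwi (by simpa using hji) c)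

theorem single_mem_span_of_exists_le (hJmono : ∀ φ ∈ J, Monotone φ)
    (hJlower : ∀ φ ∈ J, ∀ ψ : P → Fin n, Monotone ψ → ψ ≤ φ → ψ ∈ J)
    (hw : ∃ d ∈ bjExponents J, d ≤ w) {φ : ↥J} (hφ : graphDeg φ.1 ≤ w) (c : k) :
    Finsupp.single φ (monomial (w - graphDeg φ.1) c) ∈ syzygySpan k J := by
  obtain ⟨d, ⟨χ₀, -, hχ₀J, rfl⟩ | ⟨p, q, i, j, hpq, hji, rfl⟩, hle⟩ := hw
  · exact single_mem_span_of_graphDeg_le hχ₀J hle hφ c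
  · exact single_mem_span_of_inversion hJmono hJlower hpq hji
      (Finsupp.single_le_iff.1 (le_self_add.trans hle))
      (Finsupp.single_le_iff.1 (le_add_self.trans hle)) hφ c

end syzygy

section kernel

variable {k : Type*} [CommRing k] {n : ℕ} {J : Set (P → Fin n)}

theorem gradedPart_mem_span (hJmono : ∀ φ ∈ J, Monotone φ)
    (hJlower : ∀ φ ∈ J, ∀ ψ : P → Fin n, Monotone ψ → ψ ≤ φ → ψ ∈ J)
    {f : ↥J →₀ MvPolynomial (P × Fin n) k}
    (hf : Finsupp.linearCombination _ (fun φ : ↥J => mA k (GammaF φ.1)) f ∈ BJ k J)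
    (w : P × Fin n →₀ ℕ) :
    gradedPart (fun φ : ↥J => graphDeg φ.1) w f ∈ syzygySpan k J := by
  by_cases hw : ∃ d ∈ bjExponents J, d ≤ w
  · exact Submodule.sum_mem _ fun φ hφ =>
      single_mem_span_of_exists_le hJmono hJlower hw (Finset.mem_filter.1 hφ).2 _
  have hcoeff : ∑ φ ∈ f.support with graphDeg φ.1 ≤ w, coeff (w - graphDeg φ.1) (f φ) = 0 := by
    simp_rw [mA_GammaF] at hf
    rw [← coeff_linearCombination_monomial]
    exact notMem_support_iff.1 fun hmem => hw ((mem_BJ_iff k J).1 hf w hmem)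
  exact (syzygySpan k J).toAddSubgroup.sum_mem_of_sum_eq_zero
    (fun φ => (Finsupp.singleAddHom φ).comp (monomial (w - graphDeg φ.1)).toAddMonoidHom) hcoeff
    fun φ hφ ψ hψ c => single_sub_single_mem_span_of_not_exists_le hw
      (Finset.mem_filter.1 hφ).2 (Finset.mem_filter.1 hψ).2 c

theorem span_syzygyGens_le_ker :
    syzygySpan k J ≤ LinearMap.ker (Finsupp.linearCombination (MvPolynomial (P × Fin n) k)
      (fun φ : ↥J => Ideal.Quotient.mk (BJ k J) (mA k (GammaF φ.1)))) := by
  rw [Submodule.span_le]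
  rintro v (⟨φ, p, i, hB, rfl⟩ | ⟨φ, ψ, p, -, hagree, rfl⟩) <;>
    rw [SetLike.mem_coe, Finsupp.mem_ker_linearCombination_mk_iff]
  · rwa [Finsupp.linearCombination_single, smul_eq_mul]
  · rw [map_sub, Finsupp.linearCombination_single, Finsupp.linearCombination_single, smul_eq_mul,
      smul_eq_mul, X_mul_mA_GammaF, X_mul_mA_GammaF, add_comm, graphDeg_add_single_eq hagree,
      add_comm, sub_self]
    exact zero_mem _

end kernel

theorem stmt11_general (k : Type*) [Field k] {n : ℕ} (J : Set (P → Fin n))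
    (hJ1 : ∀ φ ∈ J, Monotone φ)
    (hJ2 : ∀ φ ∈ J, ∀ ψ : P → Fin n, Monotone ψ → ψ ≤ φ → ψ ∈ J) :
    LinearMap.ker
        (Finsupp.linearCombination (MvPolynomial (P × Fin n) k)
          (fun φ : ↥J => Ideal.Quotient.mk (BJ k J) (mA k (GammaF φ.1)))) =
      Submodule.span (MvPolynomial (P × Fin n) k)
        ({v : ↥J →₀ MvPolynomial (P × Fin n) k |
            ∃ (φ : ↥J) (p : P) (i : Fin n),
              X (p, i) * mA k (GammaF φ.1) ∈ BJ k J ∧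
              v = Finsupp.single φ (X (p, i))} ∪
          {v : ↥J →₀ MvPolynomial (P × Fin n) k |
            ∃ (φ ψ : ↥J) (p : P),
              φ.1 p < ψ.1 p ∧ (∀ q : P, q ≠ p → φ.1 q = ψ.1 q) ∧
              v = Finsupp.single φ (X (p, ψ.1 p)) - Finsupp.single ψ (X (p, φ.1 p))}) := by
  refine le_antisymm (fun f hf => ?_) span_syzygyGens_le_ker
  rw [Finsupp.mem_ker_linearCombination_mk_iff] at hf
  rw [← sum_gradedPart (fun φ : ↥J => graphDeg φ.1) f]
  exact Submodule.sum_mem _ fun w _ => gradedPart_mem_span hJ1 hJ2 hf w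

/-- Let J be a nonempty poset ideal in Hom(P,[n]) and consider the S-linear map
ε : ⊕_{φ∈J} S·e_φ → S/B(J), e_φ ↦ m_{Γφ}.  Its kernel is generated by the elements
(i) x_{p,i}·e_φ with x_{p,i}·m_{Γφ} ∈ B(J), and
(ii) x_{p,ψ(p)}·e_φ − x_{p,φ(p)}·e_ψ for φ, ψ ∈ J differing exactly at p, φ(p) < ψ(p). -/
theorem stmt11 (k : Type*) [Field k] {n : ℕ} (J : Set (P → Fin n))
    (hJ1 : ∀ φ ∈ J, Monotone φ)
    (hJ2 : ∀ φ ∈ J, ∀ ψ : P → Fin n, Monotone ψ → ψ ≤ φ → ψ ∈ J)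
    (hJne : J.Nonempty) :
    LinearMap.ker
        (Finsupp.linearCombination (MvPolynomial (P × Fin n) k)
          (fun φ : ↥J => Ideal.Quotient.mk (BJ k J) (mA k (GammaF φ.1)))) =
      Submodule.span (MvPolynomial (P × Fin n) k)
        ({v : ↥J →₀ MvPolynomial (P × Fin n) k |
            ∃ (φ : ↥J) (p : P) (i : Fin n),
              X (p, i) * mA k (GammaF φ.1) ∈ BJ k J ∧
              v = Finsupp.single φ (X (p, i))} ∪
          {v : ↥J →₀ MvPolynomial (P × Fin n) k |
            ∃ (φ ψ : ↥J) (p : P),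
              φ.1 p < ψ.1 p ∧ (∀ q : P, q ≠ p → φ.1 q = ψ.1 q) ∧
              v = Finsupp.single φ (X (p, ψ.1 p)) - Finsupp.single ψ (X (p, φ.1 p))}) :=
  stmt11_general k J hJ1 hJ2
end

section
/- Let J be a nonempty poset ideal in Hom(P,[n]). Then every face G of Δ(J) of cardinality |P|·(n−1) − 1 (i.e., every codimension one face) is contained in at most two facets of Δ(J). -/
variable {P : Type*} [PartialOrder P] [Fintype P] [DecidableEq P]

/-- F is a face of Δ(J) iff F misses the graph Γφ of some φ ∈ J. -/
def IsFace {n : ℕ} (J : Set (P → Fin n)) (F : Finset (P × Fin n)) : Prop :=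
  ∃ φ ∈ J, ∀ p : P, (p, φ p) ∉ F

/-- A facet of Δ(J) is a face maximal under inclusion. -/
def IsFacet {n : ℕ} (J : Set (P → Fin n)) (F : Finset (P × Fin n)) : Prop :=
  IsFace J F ∧ ∀ G : Finset (P × Fin n), IsFace J G → F ⊆ G → F = G

/-!
A facet containing `G` is the complement of a graph `Γφ`, so `Γφ ⊆ Gᶜ`, and `Gᶜ` has at most
`|P| + 1` elements. A map whose graph lies in a set `T ⊆ P × [n]` picks one point in each
column `Tₚ` of `T`; when every column is nonempty there are therefore at most
`∏ₚ |Tₚ| ≤ ∏ₚ 2 ^ (|Tₚ| - 1) = 2 ^ (|T| - |P|) ≤ 2` such maps.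
-/

open Finset

theorem Nat.le_two_pow_sub_one (x : ℕ) : x ≤ 2 ^ (x - 1) := by
  rcases Nat.eq_zero_or_pos x with rfl | hx
  · exact Nat.zero_le _
  · have := Nat.lt_two_pow_self (n := x - 1)
    omega

theorem card_le_two_pow_of_forall_mem_graph {α β : Type*} [Fintype α] [DecidableEq α]
    [DecidableEq β] (T : Finset (α × β)) (s : Finset (α → β))
    (hs : ∀ f ∈ s, ∀ a, (a, f a) ∈ T) : #s ≤ 2 ^ (#T - Fintype.card α) := by
  rcases s.eq_empty_or_nonempty with rfl | ⟨f, hf⟩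
  · simp
  set column : α → Finset (α × β) := fun a => T.filter (·.1 = a)
  have hcolumn_pos : ∀ a, 1 ≤ #(column a) := fun a =>
    card_pos.mpr ⟨(a, f a), mem_filter.mpr ⟨hs f hf a, rfl⟩⟩
  have hT : #T = ∑ a, #(column a) := card_eq_sum_card_fiberwise fun _ _ => mem_univ _
  have hs_sub : s ⊆ Fintype.piFinset fun a => (column a).image Prod.snd := fun g hg =>
    Fintype.mem_piFinset.mpr fun a =>
      mem_image.mpr ⟨(a, g a), mem_filter.mpr ⟨hs g hg a, rfl⟩, rfl⟩
  calc #s ≤ ∏ a, #((column a).image Prod.snd) := by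
        simpa only [Fintype.card_piFinset] using card_le_card hs_sub
    _ ≤ ∏ a, 2 ^ (#(column a) - 1) :=
        prod_le_prod' fun a _ => card_image_le.trans (Nat.le_two_pow_sub_one _)
    _ = 2 ^ (#T - Fintype.card α) := by
        rw [prod_pow_eq_pow_sum, hT, ← card_univ (α := α), card_eq_sum_ones,
          ← sum_tsub_distrib]
        exact fun a _ => hcolumn_pos a

theorem IsFacet.exists_eq_compl_gammaF {α : Type*} [Fintype α] [DecidableEq α] {n : ℕ}
    {J : Set (α → Fin n)} {F : Finset (α × Fin n)} (h : IsFacet J F) :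
    ∃ φ ∈ J, F = (GammaF φ)ᶜ := by
  obtain ⟨⟨φ, hφJ, hφ⟩, hmax⟩ := h
  refine ⟨φ, hφJ, hmax _ ⟨φ, hφJ, fun p hp => ?_⟩ fun x hx => ?_⟩
  · exact mem_compl.mp hp (mem_image_of_mem _ (mem_univ p))
  · simp only [GammaF, mem_compl, mem_image, mem_univ, true_and, not_exists]
    rintro p rfl
    exact hφ p hx

theorem mem_compl_of_subset_compl_gammaF {α : Type*} [Fintype α] [DecidableEq α] {n : ℕ}
    {G : Finset (α × Fin n)} {φ : α → Fin n} (h : G ⊆ (GammaF φ)ᶜ) (a : α) : (a, φ a) ∈ Gᶜ :=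
  subset_compl_comm.mp h (mem_image_of_mem _ (mem_univ a))

theorem stmt14_general {n : ℕ} (J : Set (P → Fin n))
    (G : Finset (P × Fin n))
    (hcard : G.card = Fintype.card P * (n - 1) - 1) :
    ∀ F₁ F₂ F₃ : Finset (P × Fin n),
      IsFacet J F₁ → G ⊆ F₁ → IsFacet J F₂ → G ⊆ F₂ → IsFacet J F₃ → G ⊆ F₃ →
      F₁ = F₂ ∨ F₁ = F₃ ∨ F₂ = F₃ := by
  intro F₁ F₂ F₃ h₁ hG₁ h₂ hG₂ h₃ hG₃
  obtain ⟨φ₁, -, rfl⟩ := h₁.exists_eq_compl_gammaF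
  obtain ⟨φ₂, -, rfl⟩ := h₂.exists_eq_compl_gammaF
  obtain ⟨φ₃, -, rfl⟩ := h₃.exists_eq_compl_gammaF
  have hcompl : #Gᶜ ≤ Fintype.card P + 1 := by
    rw [card_compl, Fintype.card_prod, Fintype.card_fin, hcard, Nat.mul_sub_one]
    omega
  have htwo : #({φ₁, φ₂, φ₃} : Finset (P → Fin n)) ≤ 2 ^ 1 := by
    refine (card_le_two_pow_of_forall_mem_graph Gᶜ _ ?_).trans
      (Nat.pow_le_pow_right two_pos (by omega))
    simp only [mem_insert, mem_singleton, forall_eq_or_imp, forall_eq]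
    exact ⟨mem_compl_of_subset_compl_gammaF hG₁, mem_compl_of_subset_compl_gammaF hG₂,
      mem_compl_of_subset_compl_gammaF hG₃⟩
  by_contra! ⟨h₁₂, h₁₃, h₂₃⟩
  have hthree : #({φ₁, φ₂, φ₃} : Finset (P → Fin n)) = 3 :=
    card_eq_three.mpr ⟨φ₁, φ₂, φ₃, fun h => h₁₂ (h ▸ rfl), fun h => h₁₃ (h ▸ rfl),
      fun h => h₂₃ (h ▸ rfl), rfl⟩
  omega

/-- Let J be a nonempty poset ideal in Hom(P,[n]).  Every face G of Δ(J) of cardinality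
|P|·(n−1) − 1 (codimension one face) is contained in at most two facets of Δ(J). -/
theorem stmt14 [Nonempty P] {n : ℕ} (hn : 0 < n) (J : Set (P → Fin n))
    (hJ1 : ∀ φ ∈ J, Monotone φ)
    (hJ2 : ∀ φ ∈ J, ∀ ψ : P → Fin n, Monotone ψ → ψ ≤ φ → ψ ∈ J)
    (hJne : J.Nonempty)
    (G : Finset (P × Fin n)) (hG : IsFace J G)
    (hcard : G.card = Fintype.card P * (n - 1) - 1) :
    ∀ F₁ F₂ F₃ : Finset (P × Fin n),
      IsFacet J F₁ → G ⊆ F₁ → IsFacet J F₂ → G ⊆ F₂ → IsFacet J F₃ → G ⊆ F₃ →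
      F₁ = F₂ ∨ F₁ = F₃ ∨ F₂ = F₃ :=
  stmt14_general J G hcard
end

section
/- Let n ≥ 2 and let J be a nonempty poset ideal in Hom(P,[n]). If P is not an antichain (i.e., there exist q < q' in P), then there exists a face G of Δ(J) of cardinality |P|·(n−1) − 1 that is contained in exactly one facet of Δ(J). -/
variable {P : Type*} [PartialOrder P] [Fintype P] [DecidableEq P]

open Finset

section ComplGammaF

omit [PartialOrder P]

variable {n : ℕ} {J : Set (P → Fin n)}

@[simp]
lemma mem_GammaF {φ : P → Fin n} {a : P} {b : Fin n} : (a, b) ∈ GammaF φ ↔ φ a = b := by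
  simp [GammaF, Prod.ext_iff]

lemma card_GammaF (φ : P → Fin n) : #(GammaF φ) = Fintype.card P := by
  rw [GammaF, card_image_of_injective _ fun _ _ h => congrArg Prod.fst h, card_univ]

lemma card_compl_GammaF (φ : P → Fin n) :
    #(univ \ GammaF φ) = Fintype.card P * (n - 1) := by
  rw [card_sdiff_of_subset (subset_univ _), card_GammaF, card_univ, Fintype.card_prod,
    Fintype.card_fin, Nat.mul_sub_one]

lemma subset_compl_GammaF_iff {φ : P → Fin n} {F : Finset (P × Fin n)} :
    F ⊆ univ \ GammaF φ ↔ ∀ p, (p, φ p) ∉ F := by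
  constructor
  · exact fun h p hp => (mem_sdiff.mp (h hp)).2 (mem_GammaF.mpr rfl)
  · rintro h ⟨a, b⟩ hab
    exact mem_sdiff.mpr ⟨mem_univ _, fun hb => h a (mem_GammaF.mp hb ▸ hab)⟩

lemma forall_notMem_erase_compl_GammaF_iff {φ ψ : P → Fin n} {x : P × Fin n} :
    (∀ p, (p, ψ p) ∉ (univ \ GammaF φ).erase x) ↔ ∀ p, ψ p = φ p ∨ (p, ψ p) = x := by
  refine forall_congr' fun p => ?_
  simp only [mem_erase, mem_sdiff, mem_univ, true_and, mem_GammaF, not_and, not_not]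
  tauto

lemma isFace_iff_exists_subset_compl_GammaF {F : Finset (P × Fin n)} :
    IsFace J F ↔ ∃ φ ∈ J, F ⊆ univ \ GammaF φ := by
  simp only [IsFace, subset_compl_GammaF_iff]

lemma isFacet_compl_GammaF {φ : P → Fin n} (hφ : φ ∈ J) : IsFacet J (univ \ GammaF φ) := by
  refine ⟨isFace_iff_exists_subset_compl_GammaF.mpr ⟨φ, hφ, subset_rfl⟩, ?_⟩
  rintro G ⟨ψ, -, hψG⟩ hsub
  have hψφ : ψ = φ := funext fun p => by
    by_contra hne
    exact hψG p (hsub (mem_sdiff.mpr ⟨mem_univ _, fun h => hne (mem_GammaF.mp h).symm⟩))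
  subst hψφ
  exact hsub.antisymm (subset_compl_GammaF_iff.mpr hψG)

lemma IsFacet.exists_eq_compl_GammaF {F : Finset (P × Fin n)} (hF : IsFacet J F) :
    ∃ φ ∈ J, F = univ \ GammaF φ := by
  obtain ⟨φ, hφ, hFφ⟩ := isFace_iff_exists_subset_compl_GammaF.mp hF.1
  exact ⟨φ, hφ, hF.2 _ (isFacet_compl_GammaF hφ).1 hFφ⟩

lemma existsUnique_isFacet_superset {G : Finset (P × Fin n)} {φ : P → Fin n} (hφ : φ ∈ J)
    (hGφ : G ⊆ univ \ GammaF φ) (huniq : ∀ ψ ∈ J, G ⊆ univ \ GammaF ψ → ψ = φ) :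
    ∃! F : Finset (P × Fin n), IsFacet J F ∧ G ⊆ F := by
  refine ⟨univ \ GammaF φ, ⟨isFacet_compl_GammaF hφ, hGφ⟩, ?_⟩
  rintro F ⟨hF, hGF⟩
  obtain ⟨ψ, hψ, rfl⟩ := hF.exists_eq_compl_GammaF
  rw [huniq ψ hψ hGF]

end ComplGammaF

theorem stmt15_general {n : ℕ} (hn : 2 ≤ n) (J : Set (P → Fin n))
    (hJ1 : ∀ φ ∈ J, Monotone φ)
    (hJ2 : ∀ φ ∈ J, ∀ ψ : P → Fin n, Monotone ψ → ψ ≤ φ → ψ ∈ J)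
    (hJne : J.Nonempty)
    (hP : ∃ q q' : P, q < q') :
    ∃ G : Finset (P × Fin n), IsFace J G ∧ G.card = Fintype.card P * (n - 1) - 1 ∧
      ∃! F : Finset (P × Fin n), IsFacet J F ∧ G ⊆ F := by
  obtain ⟨q, q', hqq'⟩ := hP
  obtain ⟨m, rfl⟩ : ∃ m, n = m + 2 := ⟨n - 2, by omega⟩
  have hzero : (0 : P → Fin (m + 2)) ∈ J :=
    hJne.elim fun φ hφ => hJ2 φ hφ 0 monotone_const fun _ => Fin.zero_le _
  have hmem : (q, 1) ∈ univ \ GammaF (0 : P → Fin (m + 2)) := by simp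
  -- Removing `(q, 1)` leaves room only for maps vanishing off `q` with value 1 at `q`,
  -- and such a map cannot be monotone since `q < q'`.
  have huniq : ∀ ψ ∈ J, (univ \ GammaF 0).erase (q, 1) ⊆ univ \ GammaF ψ → ψ = 0 := by
    intro ψ hψ hsub
    have hval := forall_notMem_erase_compl_GammaF_iff.mp (subset_compl_GammaF_iff.mp hsub)
    have hq' : ψ q' = 0 := (hval q').resolve_right fun h => hqq'.ne (congrArg Prod.fst h).symm
    funext p
    refine (hval p).resolve_right fun h => ?_
    obtain ⟨rfl, hp⟩ : p = q ∧ ψ p = 1 := Prod.mk.inj h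
    have hmono := hJ1 ψ hψ hqq'.le
    rw [hp, hq'] at hmono
    exact absurd hmono (by simp)
  refine ⟨(univ \ GammaF 0).erase (q, 1), ?_, ?_, ?_⟩
  · exact isFace_iff_exists_subset_compl_GammaF.mpr ⟨0, hzero, erase_subset _ _⟩
  · rw [card_erase_of_mem hmem, card_compl_GammaF]
  · exact existsUnique_isFacet_superset hzero (erase_subset _ _) huniq

/-- Let n ≥ 2 and J a nonempty poset ideal in Hom(P,[n]).  If P is not an antichain, then
some face G of Δ(J) of cardinality |P|·(n−1) − 1 is contained in exactly one facet of Δ(J). -/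
theorem stmt15 [Nonempty P] {n : ℕ} (hn : 2 ≤ n) (J : Set (P → Fin n))
    (hJ1 : ∀ φ ∈ J, Monotone φ)
    (hJ2 : ∀ φ ∈ J, ∀ ψ : P → Fin n, Monotone ψ → ψ ≤ φ → ψ ∈ J)
    (hJne : J.Nonempty)
    (hP : ∃ q q' : P, q < q') :
    ∃ G : Finset (P × Fin n), IsFace J G ∧ G.card = Fintype.card P * (n - 1) - 1 ∧
      ∃! F : Finset (P × Fin n), IsFacet J F ∧ G ⊆ F :=
  stmt15_general hn J hJ1 hJ2 hJne hP
end

section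
/- Let J be a poset ideal in Hom(P,[n]) with ∅ ≠ J ⊊ Hom(P,[n]). Then there exist isotone maps φ ∈ J and ψ ∈ Hom(P,[n]) \ J that differ at exactly one element: there is p ∈ P with ψ(p) > φ(p) and ψ(q) = φ(q) for all q ≠ p. -/
variable {P : Type*} [PartialOrder P] [Fintype P]

/-!
Among the isotone maps outside `J` choose a pointwise minimal `ψ`. Since `J` is nonempty, `ψ`
is not constantly the least value, so `ψ p` is not least for some `p`; take `p` minimal with this
property. Every `q < p` then has `ψ q < ψ p`, so lowering `ψ` by one at `p` keeps it isotone,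
and by minimality of `ψ` the lowered map lies in `J`.
-/

open Function Order

section

variable {α β : Type*} [PartialOrder α] [Preorder β]

theorem Monotone.update_pred [DecidableEq α] [PredOrder β] {f : α → β} (hf : Monotone f) {a : α}
    (ha : ∀ b < a, f b < f a) : Monotone (update f a (pred (f a))) := by
  intro b c hbc
  rcases eq_or_ne b a with rfl | hb <;> rcases eq_or_ne c b with rfl | hc
  · exact le_rfl
  · rw [update_self, update_of_ne hc]
    exact (pred_le _).trans (hf hbc)
  · exact le_rfl
  · rw [update_of_ne hb]
    rcases eq_or_ne c a with rfl | hca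
    · rw [update_self]
      exact le_pred_of_lt (ha b (hbc.lt_of_ne hb))
    · rw [update_of_ne hca]
      exact hf hbc

theorem Monotone.exists_not_isMin_forall_lt_lt [Finite α] {f : α → β} (hf : Monotone f)
    (h : ∃ a, ¬IsMin (f a)) : ∃ a, ¬IsMin (f a) ∧ ∀ b < a, f b < f a := by
  obtain ⟨a, hmin⟩ := (Set.toFinite {a | ¬IsMin (f a)}).exists_minimal h
  refine ⟨a, hmin.prop, fun b hba => (hf hba.le).lt_of_not_ge fun hab => hmin.prop ?_⟩
  have hb : IsMin (f b) := not_not.mp fun hb => hmin.not_lt hb hba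
  exact hb.mono hab

end

theorem stmt16_general {n : ℕ} (J : Set (P → Fin n))
    (hJ2 : ∀ φ ∈ J, ∀ ψ : P → Fin n, Monotone ψ → ψ ≤ φ → ψ ∈ J)
    (hJne : J.Nonempty)
    (hproper : ∃ ψ : P → Fin n, Monotone ψ ∧ ψ ∉ J) :
    ∃ φ ∈ J, ∃ ψ : P → Fin n, Monotone ψ ∧ ψ ∉ J ∧
      ∃ p : P, φ p < ψ p ∧ ∀ q : P, q ≠ p → φ q = ψ q := by
  classical
  obtain ⟨ψ, hψmin⟩ :=
    (Set.toFinite {ψ : P → Fin n | Monotone ψ ∧ ψ ∉ J}).exists_minimal hproper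
  obtain ⟨hψ, hψJ⟩ := hψmin.prop
  have hnot_min : ∃ p, ¬IsMin (ψ p) := by
    by_contra! h
    obtain ⟨φ, hφ⟩ := hJne
    exact hψJ (hJ2 φ hφ ψ hψ fun p => not_lt.mp (h p).not_lt)
  obtain ⟨p, hp, hp_lt⟩ := hψ.exists_not_isMin_forall_lt_lt hnot_min
  have hlt : pred (ψ p) < ψ p := pred_lt_of_not_isMin hp
  have hφJ : update ψ p (pred (ψ p)) ∈ J := by
    by_contra hφJ
    exact hψmin.not_lt ⟨hψ.update_pred hp_lt, hφJ⟩ (update_lt_self_iff.mpr hlt)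
  exact ⟨_, hφJ, ψ, hψ, hψJ, p, by rwa [update_self], fun q hq => update_of_ne hq _ _⟩

/-- Let J be a poset ideal in Hom(P,[n]) with ∅ ≠ J ⊊ Hom(P,[n]).  Then there are isotone
maps φ ∈ J and ψ ∉ J differing at exactly one element: ψ(p) > φ(p) and ψ(q) = φ(q) for
q ≠ p. -/
theorem stmt16 [Nonempty P] {n : ℕ} (J : Set (P → Fin n))
    (hJ1 : ∀ φ ∈ J, Monotone φ)
    (hJ2 : ∀ φ ∈ J, ∀ ψ : P → Fin n, Monotone ψ → ψ ≤ φ → ψ ∈ J)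
    (hJne : J.Nonempty)
    (hproper : ∃ ψ : P → Fin n, Monotone ψ ∧ ψ ∉ J) :
    ∃ φ ∈ J, ∃ ψ : P → Fin n, Monotone ψ ∧ ψ ∉ J ∧
      ∃ p : P, φ p < ψ p ∧ ∀ q : P, q ≠ p → φ q = ψ q :=
  stmt16_general J hJ2 hJne hproper
end
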